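/- For all n ≥ 1, the determinant of the n!×n! matrix with rows and columns indexed by S_n and entries q^{maj(u v^{-1})} equals ∏_{k=2}^{n} (1 − q^k)^{n!·(k−1)/k}. -/

import Mathlib

/-!
Embed `Sₙ` in `Sₙ₊₁` as the stabiliser of the last point. Every `g ∈ Sₙ₊₁` factors uniquely as
`g = c h` with `c : x ↦ x + a` a cyclic shift and `h ∈ Sₙ`, and then `maj g = maj c + maj h`.
So `q^maj` is the convolution of its restrictions to the cyclic group and to `Sₙ`, and the group
matrix `(q^{maj(u v⁻¹)})` factors accordingly. The group matrix of a function supported on a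
subgroup is block diagonal along the cosets, so the two factors have determinants
`D^{n!}` and `det(Sₙ-matrix)^{n+1}`, where `D = (1 - q^{n+1})^n` is the determinant of the
circulant matrix `(q^{maj(c_{j-i})})`. Induction on `n` gives the product formula.
-/

/-- The major index: the sum of positions `i ∈ {1,…,n-1}` (1-indexed) where
`w(i) > w(i+1)`. -/
def pmaj {n : ℕ} (w : Equiv.Perm (Fin n)) : ℕ :=
  ∑ i : Fin n, if h : i.1 + 1 < n then
    (if w ⟨i.1 + 1, h⟩ < w i then i.1 + 1 else 0) else 0

open Equiv Finset Function Matrix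

section GroupMatrix

variable {G R : Type*} [Group G] [CommRing R]

def groupMatrix (f : G → R) : Matrix G G R := Matrix.of fun u v => f (u * v⁻¹)

theorem injective_left_of_bijective_mul {K L : Type*} {φ : K → G} {ψ : L → G}
    (h : Bijective fun p : K × L => φ p.1 * ψ p.2) : Injective φ := by
  obtain ⟨⟨-, l⟩, -⟩ := h.surjective 1
  intro k k' hk
  simpa using h.injective (a₁ := (k, l)) (a₂ := (k', l)) (by simp [hk])

theorem injective_right_of_bijective_mul {K L : Type*} {φ : K → G} {ψ : L → G}
    (h : Bijective fun p : K × L => φ p.1 * ψ p.2) : Injective ψ := by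
  obtain ⟨⟨k, -⟩, -⟩ := h.surjective 1
  intro l l' hl
  simpa using h.injective (a₁ := (k, l)) (a₂ := (k, l')) (by simp [hl])

theorem bijective_mul_swap {K L : Type*} [Group K] [Group L] {φ : K →* G} {ψ : L →* G}
    (h : Bijective fun p : K × L => φ p.1 * ψ p.2) :
    Bijective fun p : L × K => ψ p.1 * φ p.2 := by
  have : (fun p : L × K => ψ p.1 * φ p.2) = (·⁻¹) ∘ (fun p : K × L => φ p.1 * ψ p.2) ∘
      ((Equiv.prodComm L K).trans ((Equiv.inv K).prodCongr (Equiv.inv L))) := by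
    funext p; simp
  rw [this]
  exact (Equiv.inv G).bijective.comp (h.comp (Equiv.bijective _))

variable [Fintype G]

theorem groupMatrix_eq_mul_of_bijective {K L : Type*} {φ : K → G} {ψ : L → G}
    (h : Bijective fun p : K × L => φ p.1 * ψ p.2) (a : K → R) (b : L → R) {f : G → R}
    (hf : ∀ k l, f (φ k * ψ l) = a k * b l) :
    groupMatrix f = groupMatrix (extend φ a 0) * groupMatrix (extend ψ b 0) := by
  have hconv : ∀ x, f x = ∑ y, extend φ a 0 (x * y⁻¹) * extend ψ b 0 y := by
    intro x
    obtain ⟨⟨k, l⟩, rfl⟩ := h.surjective x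
    rw [Fintype.sum_eq_single (ψ l)]
    · simp [(injective_left_of_bijective_mul h).extend_apply,
        (injective_right_of_bijective_mul h).extend_apply, hf]
    · intro y hy
      by_cases hy' : ∃ l', ψ l' = y
      · obtain ⟨l', rfl⟩ := hy'
        rw [extend_apply' _ _ _ ?_, Pi.zero_apply, zero_mul]
        rintro ⟨k', hk'⟩
        have := h.injective (a₁ := (k', l')) (a₂ := (k, l)) (by simp [hk'])
        exact hy (by simp_all)
      · rw [extend_apply' _ _ _ hy', Pi.zero_apply, mul_zero]
  ext u v
  rw [mul_apply, ← Equiv.sum_comp (Equiv.mulRight v)]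
  simp [groupMatrix, hconv (u * v⁻¹), mul_assoc]

theorem det_groupMatrix_extend [DecidableEq G] {K ι : Type*} [Group K] [Fintype K] [DecidableEq K]
    [Fintype ι] [DecidableEq ι] {φ : K →* G} {r : ι → G}
    (h : Bijective fun p : K × ι => φ p.1 * r p.2) (a : K → R) :
    det (groupMatrix (extend φ a 0)) = det (groupMatrix a) ^ Fintype.card ι := by
  have hφ := injective_left_of_bijective_mul h
  have hblock :
      (groupMatrix (extend φ a 0)).submatrix (Equiv.ofBijective _ h) (Equiv.ofBijective _ h) =
        blockDiagonal fun _ : ι => groupMatrix a := by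
    ext ⟨k, i⟩ ⟨k', j⟩
    simp only [submatrix_apply, Equiv.ofBijective_apply, groupMatrix, of_apply,
      blockDiagonal_apply]
    split_ifs with hij
    · subst hij
      rw [_root_.mul_inv_rev, ← mul_assoc, mul_inv_cancel_right, ← map_inv, ← map_mul,
        hφ.extend_apply]
    · refine extend_apply' _ _ _ ?_
      rintro ⟨m, hm⟩
      exact hij (congrArg Prod.snd (h.injective (a₁ := (k, i)) (a₂ := (m * k', j))
        (by simp [hm, mul_assoc])))
  rw [← det_submatrix_equiv_self (Equiv.ofBijective _ h), hblock, det_blockDiagonal, prod_const,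
    card_univ]

end GroupMatrix

section Circulant

variable {R : Type*} [CommRing R]

theorem pow_val_sub_mul_pow_val_sub_one (x : R) {m : ℕ} (d : Fin (m + 1)) :
    x ^ d.val - x * x ^ (d - 1).val = if d = 0 then 1 - x ^ (m + 1) else 0 := by
  split_ifs with hd
  · rw [hd, zero_sub, Fin.coe_neg_one, Fin.val_zero, pow_zero, ← pow_succ']
  · have : (d : ℕ) ≠ 0 := fun h => hd (Fin.ext h)
    rw [Fin.coe_sub_one, if_neg hd, ← pow_succ', Nat.sub_add_cancel (by omega), sub_self]

theorem det_pow_val_sub (x : R) (m : ℕ) :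
    det (of fun i j : Fin (m + 1) => x ^ (j - i).val) = (1 - x ^ (m + 1)) ^ m := by
  set C := of fun i j : Fin (m + 1) => x ^ (j - i).val
  -- Subtracting `x` times row `i + 1` from row `i`, for each `i < m`, makes `C` lower triangular.
  set S := of fun i k : Fin (m + 1) => if (k : ℕ) = i + 1 then (1 : R) else 0
  have hS : ∀ i j, (S * C) i j = if (i : ℕ) < m then C (i + 1) j else 0 := by
    intro i j
    rw [mul_apply]
    split_ifs with hi
    · have hk : ∀ k : Fin (m + 1), (k : ℕ) = i + 1 ↔ k = i + 1 := fun k => by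
        rw [Fin.ext_iff, Fin.val_add_one_of_lt' (by omega)]
      simp only [S, of_apply, hk, ite_mul, one_mul, zero_mul, sum_ite_eq', mem_univ, if_true]
    · refine sum_eq_zero fun k _ => ?_
      have := k.isLt
      rw [show S i k = 0 from if_neg (by omega), zero_mul]
  have hL : det (1 - x • S) = 1 := by
    rw [det_of_isUpperTriangular, prod_eq_one]
    · intro i _
      simp [S]
    · intro i k hki
      have : (k : ℕ) < i := hki
      simp [S, one_apply_ne (show i ≠ k by omega), show (k : ℕ) ≠ i + 1 by omega]
  have hentry : ∀ i j, ((1 - x • S) * C) i j =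
      if (i : ℕ) < m then (if j = i then 1 - x ^ (m + 1) else 0) else C i j := by
    intro i j
    rw [sub_mul, one_mul, smul_mul, Matrix.sub_apply, Matrix.smul_apply, hS, smul_eq_mul]
    by_cases hi : (i : ℕ) < m
    · simp only [if_pos hi, C, of_apply, ← sub_sub, pow_val_sub_mul_pow_val_sub_one, sub_eq_zero]
    · rw [if_neg hi, if_neg hi, mul_zero, sub_zero]
  have hLC : det ((1 - x • S) * C) = (1 - x ^ (m + 1)) ^ m := by
    rw [det_of_isLowerTriangular, Fin.prod_univ_castSucc]
    · simp [hentry, C]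
    · intro i j hij
      have hij : i < j := hij
      have hi : (i : ℕ) < m := by have : (i : ℕ) < j := hij; omega
      rw [hentry, if_pos hi, if_neg hij.ne']
  rwa [det_mul, hL, one_mul] at hLC

end Circulant

theorem Fin.sum_val_succ_mul_sub {R : Type*} [CommRing R] {n : ℕ} (χ : Fin (n + 1) → R) :
    ∑ i : Fin n, ((i : R) + 1) * (χ i.succ - χ i.castSucc) =
      (n + 1) * χ (Fin.last n) - ∑ i, χ i := by
  induction n with
  | zero => simp
  | succ n ih =>
    rw [Fin.sum_univ_castSucc, Fin.sum_univ_castSucc χ]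
    have := ih (χ ∘ Fin.castSucc)
    simp only [Function.comp_apply, Fin.succ_castSucc, Fin.val_castSucc] at this ⊢
    rw [this, Fin.val_last, Fin.succ_last]
    push_cast
    ring

section MajorIndex

variable {n : ℕ}

theorem pmaj_one : pmaj (1 : Perm (Fin n)) = 0 := by
  simp [pmaj, Fin.lt_def]

theorem cast_pmaj_eq_sum (w : Perm (Fin (n + 1))) :
    (pmaj w : ℤ) = ∑ i : Fin n, ((i : ℤ) + 1) * if w i.succ < w i.castSucc then 1 else 0 := by
  rw [pmaj, Fin.sum_univ_castSucc]
  simp [Fin.succ]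

theorem pmaj_addLeft_mul (a : Fin (n + 1)) {h : Perm (Fin (n + 1))}
    (hh : h (Fin.last n) = Fin.last n) :
    pmaj (Equiv.addLeft a * h) = (-a : Fin (n + 1)).val + pmaj h := by
  set w := Equiv.addLeft a * h
  have hwv : ∀ x, ((w x : Fin (n + 1)) : ℕ) =
      if n + 1 ≤ a.val + (h x).val then a.val + (h x).val - (n + 1) else a.val + (h x).val :=
    fun x => Fin.val_add_eq_ite a (h x)
  -- `χ x = 1` iff `a + h x` wraps around. The descents of `w` and `h` differ exactly where `χ`
  -- jumps, so by Abel summation `maj w - maj h = (n + 1) χ (last n) - ∑ χ`.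
  set χ : Fin (n + 1) → ℤ := fun x => if w x < a then 1 else 0
  have hdes : ∀ i : Fin n, (if w i.succ < w i.castSucc then (1 : ℤ) else 0) =
      (if h i.succ < h i.castSucc then 1 else 0) + (χ i.succ - χ i.castSucc) := by
    intro i
    have hne : (h i.succ : ℕ) ≠ h i.castSucc :=
      Fin.val_ne_of_ne (h.injective.ne (Fin.castSucc_lt_succ (i := i)).ne')
    have := (h i.succ).isLt
    have := (h i.castSucc).isLt
    simp only [χ, Fin.lt_def, hwv]
    split_ifs <;> omega
  have hcount : ∑ x, χ x = a.val := by
    rw [Equiv.sum_comp w fun y => if y < a then (1 : ℤ) else 0]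
    simp [Finset.sum_boole, Finset.filter_gt_eq_Iio]
  have hlast : χ (Fin.last n) = if a = 0 then 0 else 1 := by
    simp only [χ, Fin.lt_def, hwv, hh, Fin.val_last, ← Fin.val_eq_zero_iff]
    split_ifs <;> omega
  have hsplit : ∑ i : Fin n, ((i : ℤ) + 1) * (if w i.succ < w i.castSucc then 1 else 0) =
      ∑ i : Fin n, ((i : ℤ) + 1) * (if h i.succ < h i.castSucc then 1 else 0) +
        ∑ i : Fin n, ((i : ℤ) + 1) * (χ i.succ - χ i.castSucc) := by
    rw [← sum_add_distrib]
    exact sum_congr rfl fun i _ => by rw [hdes, mul_add]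
  zify
  rw [cast_pmaj_eq_sum, cast_pmaj_eq_sum, hsplit, Fin.sum_val_succ_mul_sub, hcount, hlast,
    Fin.val_neg]
  split_ifs with ha
  · simp [ha]
  · push_cast [Nat.cast_sub a.isLt.le]
    ring

theorem pmaj_addLeft (a : Fin (n + 1)) : pmaj (Equiv.addLeft a) = (-a : Fin (n + 1)).val := by
  simpa [pmaj_one] using pmaj_addLeft_mul a (h := 1) rfl

def permCastSucc (n : ℕ) : Perm (Fin n) →* Perm (Fin (n + 1)) :=
  Perm.extendDomainHom (finSuccAboveEquiv (Fin.last n))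

theorem permCastSucc_apply_castSucc (σ : Perm (Fin n)) (i : Fin n) :
    permCastSucc n σ i.castSucc = (σ i).castSucc := by
  simpa [permCastSucc, finSuccAboveEquiv_apply] using
    Perm.extendDomain_apply_image σ (finSuccAboveEquiv (Fin.last n)) i

theorem permCastSucc_apply_last (σ : Perm (Fin n)) : permCastSucc n σ (Fin.last n) = Fin.last n :=
  Perm.extendDomain_apply_not_subtype _ _ (not_not.2 rfl)

theorem pmaj_permCastSucc (σ : Perm (Fin n)) : pmaj (permCastSucc n σ) = pmaj σ := by
  cases n with
  | zero => simp [pmaj]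
  | succ n =>
    zify
    rw [cast_pmaj_eq_sum, cast_pmaj_eq_sum, Fin.sum_univ_castSucc, Fin.succ_last,
      permCastSucc_apply_last, if_neg (Fin.le_last _).not_gt, mul_zero, add_zero]
    refine sum_congr rfl fun i _ => ?_
    rw [Fin.succ_castSucc, permCastSucc_apply_castSucc, permCastSucc_apply_castSucc]
    simp only [Fin.castSucc_lt_castSucc_iff, Fin.val_castSucc]

end MajorIndex

def cyclicShift (n : ℕ) : Multiplicative (Fin (n + 1)) →* Perm (Fin (n + 1)) where
  toFun a := Equiv.addLeft a.toAdd
  map_one' := Equiv.addLeft_zero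
  map_mul' a b := Equiv.addLeft_add a.toAdd b.toAdd

theorem bijective_cyclicShift_mul_permCastSucc (n : ℕ) :
    Bijective fun p : Multiplicative (Fin (n + 1)) × Perm (Fin n) =>
      cyclicShift n p.1 * permCastSucc n p.2 := by
  rw [Fintype.bijective_iff_injective_and_card]
  refine ⟨fun ⟨a, σ⟩ ⟨b, τ⟩ h => ?_, by simp [Fintype.card_perm, Nat.factorial_succ]⟩
  have hab : a = b := by
    simpa [cyclicShift, permCastSucc_apply_last] using congrArg (· (Fin.last n)) h
  subst hab
  simp only [mul_right_inj] at h
  rw [Perm.extendDomainHom_injective _ h]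

section Determinant

variable {R : Type*} [CommRing R] (x : R)

theorem det_groupMatrix_pow_pmaj_cyclicShift (n : ℕ) :
    det (groupMatrix fun a => x ^ pmaj (cyclicShift n a)) = (1 - x ^ (n + 1)) ^ n := by
  rw [← det_pow_val_sub x n, ← det_submatrix_equiv_self Multiplicative.ofAdd]
  congr 1
  ext i j
  simp [groupMatrix, cyclicShift, pmaj_addLeft, ← sub_eq_add_neg]

theorem det_groupMatrix_pow_pmaj_succ (n : ℕ) :
    det (groupMatrix fun g : Perm (Fin (n + 1)) => x ^ pmaj g) =
      (1 - x ^ (n + 1)) ^ (n * n.factorial) *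
        det (groupMatrix fun σ : Perm (Fin n) => x ^ pmaj σ) ^ (n + 1) := by
  have hbij := bijective_cyclicShift_mul_permCastSucc n
  have hmaj : ∀ a σ, x ^ pmaj (cyclicShift n a * permCastSucc n σ) =
      x ^ pmaj (cyclicShift n a) * x ^ pmaj σ := fun a σ => by
    rw [← pow_add, cyclicShift, MonoidHom.coe_mk, OneHom.coe_mk,
      pmaj_addLeft_mul _ (permCastSucc_apply_last σ), pmaj_addLeft, pmaj_permCastSucc]
  rw [groupMatrix_eq_mul_of_bijective hbij _ _ hmaj, det_mul, det_groupMatrix_extend hbij,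
    det_groupMatrix_extend (bijective_mul_swap hbij), det_groupMatrix_pow_pmaj_cyclicShift x,
    ← pow_mul, Fintype.card_perm, Fintype.card_fin, Fintype.card_multiplicative, Fintype.card_fin]

theorem det_groupMatrix_pow_pmaj (n : ℕ) :
    det (groupMatrix fun σ : Perm (Fin n) => x ^ pmaj σ) =
      ∏ k ∈ Icc 2 n, (1 - x ^ k) ^ (n.factorial * (k - 1) / k) := by
  induction n with
  | zero => simp [det_unique, groupMatrix, pmaj_one]
  | succ n ih =>
    rw [det_groupMatrix_pow_pmaj_succ x, ih, ← prod_pow]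
    rcases Nat.eq_zero_or_pos n with rfl | hn
    · simp
    rw [prod_Icc_succ_top (by omega : 2 ≤ n + 1), mul_comm]
    congr 1
    · refine prod_congr rfl fun k hk => ?_
      have hk_dvd : k ∣ n.factorial * (k - 1) :=
        dvd_mul_of_dvd_left (Nat.dvd_factorial (by grind) (mem_Icc.1 hk).2) _
      rw [← pow_mul, Nat.factorial_succ, mul_assoc, Nat.mul_div_assoc _ hk_dvd, mul_comm]
    · rw [Nat.factorial_succ, Nat.add_sub_cancel, mul_assoc, Nat.mul_div_cancel_left _ n.succ_pos,
        mul_comm]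

end Determinant

theorem stmt10_general (n : ℕ) :
    Matrix.det (Matrix.of fun u v : Equiv.Perm (Fin n) =>
        (Polynomial.X : Polynomial ℚ) ^ pmaj (u * v⁻¹)) =
      ∏ k ∈ Finset.Icc 2 n,
        (1 - (Polynomial.X : Polynomial ℚ) ^ k) ^ (n.factorial * (k - 1) / k) :=
  det_groupMatrix_pow_pmaj Polynomial.X n

/-- Theorem 56 of Krattenthaler / Thibon: for all `n ≥ 1`,
`det( q^{maj(u v⁻¹)} )_{u,v ∈ Sₙ} = ∏_{k=2}^n (1 - q^k)^{n!(k-1)/k}`. -/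
theorem stmt10 (n : ℕ) (hn : 1 ≤ n) :
    Matrix.det (Matrix.of fun u v : Equiv.Perm (Fin n) =>
        (Polynomial.X : Polynomial ℚ) ^ pmaj (u * v⁻¹)) =
      ∏ k ∈ Finset.Icc 2 n,
        (1 - (Polynomial.X : Polynomial ℚ) ^ k) ^ (n.factorial * (k - 1) / k) :=
  stmt10_general n
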